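/- Let X, Θ, Y be separable real Hilbert spaces, U = X × Θ with norm ‖(x,θ)‖_U² = ‖x‖_X² + ‖θ‖_Θ², and F : U → Y Lipschitz with constant L. Let H be the class of all maps E : U → Y that are Lipschitz with constant at most R and satisfy ‖E(0)‖_Y ≤ B. Fix a deployment law ν_dep, a Borel probability measure on U with finite second moment, and define J(ν) = inf_{E∈H} R_ν(E) + c(ν,ν_dep) · W₂(ν,ν_dep). Then for every Borel probability measure ν on U with finite second moment, J(ν) ≥ J(ν_dep) = inf_{E∈H} R_{ν_dep}(E). -/

import Mathlib

open MeasureTheory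
open scoped ENNReal NNReal

noncomputable section

/-- The Hilbert norm on the product `U = X × Θ`: `‖(x, θ)‖_U = √(‖x‖² + ‖θ‖²)`. -/
def nU {X Θ : Type*} [NormedAddCommGroup X] [NormedAddCommGroup Θ] (u : X × Θ) : ℝ :=
  Real.sqrt (‖u.1‖ ^ 2 + ‖u.2‖ ^ 2)

/-- The 2-Wasserstein distance associated with a cost function `d`: the infimum over all
couplings `γ` of `μ` and `μ'` (i.e. probability measures on the product whose marginals are
`μ` and `μ'`) of `(∫ d(u,v)² dγ)^{1/2}`. -/
def W2 {α : Type*} [MeasurableSpace α] (d : α → α → ℝ) (μ μ' : Measure α) : ℝ :=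
  sInf { r : ℝ | ∃ γ : Measure (α × α), IsProbabilityMeasure γ ∧
      γ.map Prod.fst = μ ∧ γ.map Prod.snd = μ' ∧
      r = Real.sqrt (∫ p, d p.1 p.2 ^ 2 ∂γ) }

/-- The squared-error risk `R_ν(E) = ∫ ‖F(u) - E(u)‖² dν(u)`. -/
def risk {X Θ Y : Type*} [NormedAddCommGroup X] [NormedAddCommGroup Θ] [NormedAddCommGroup Y]
    [MeasurableSpace X] [MeasurableSpace Θ] (F E : X × Θ → Y) (ν : Measure (X × Θ)) : ℝ :=
  ∫ u, ‖F u - E u‖ ^ 2 ∂ν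

/-- The hypothesis class `H`: all maps `E : U → Y` that are Lipschitz with constant at most
`R₀` (with respect to the Hilbert product norm on `U`) and satisfy `‖E 0‖ ≤ B`. -/
def Hclass {X Θ Y : Type*} [NormedAddCommGroup X] [NormedAddCommGroup Θ] [NormedAddCommGroup Y]
    (R₀ B : ℝ) : Set (X × Θ → Y) :=
  { E | (∀ u v, ‖E u - E v‖ ≤ R₀ * nU (u - v)) ∧ ‖E 0‖ ≤ B }

/-- The constant `c(ν,ν') = C₁² √(2(∫‖u‖_U² dν + ∫‖u‖_U² dν')) + 2 C₁ C₂`, where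
`C₁ = L + R₀` and `C₂ = ‖F 0‖ + B`. -/
def cShift {X Θ Y : Type*} [NormedAddCommGroup X] [NormedAddCommGroup Θ] [NormedAddCommGroup Y]
    [MeasurableSpace X] [MeasurableSpace Θ] (L R₀ B : ℝ) (F : X × Θ → Y)
    (ν ν' : Measure (X × Θ)) : ℝ :=
  (L + R₀) ^ 2 * Real.sqrt (2 * ((∫ u, nU u ^ 2 ∂ν) + ∫ u, nU u ^ 2 ∂ν'))
    + 2 * (L + R₀) * (‖F 0‖ + B)

/-- The bound objective `J(ν) = inf_{E ∈ H} R_ν(E) + c(ν, ν_dep) W₂(ν, ν_dep)`, where the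
Wasserstein distance on `U = X × Θ` is taken with respect to the Hilbert product norm. -/
def Jobj {X Θ Y : Type*} [NormedAddCommGroup X] [NormedAddCommGroup Θ] [NormedAddCommGroup Y]
    [MeasurableSpace X] [MeasurableSpace Θ] (L R₀ B : ℝ) (F : X × Θ → Y)
    (νdep ν : Measure (X × Θ)) : ℝ :=
  sInf ((fun E => risk F E ν) '' Hclass R₀ B)
    + cShift L R₀ B F ν νdep * W2 (fun u v => nU (u - v)) ν νdep

/-!
For a coupling `γ` of `ν` and `ν_dep` and `E ∈ H`, the residual `f = F - E` is
`C₁`-Lipschitz with `‖f 0‖ ≤ C₂`, so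
`‖f v‖² - ‖f u‖² = (‖f v‖ - ‖f u‖)(‖f v‖ + ‖f u‖) ≤ C₁ ‖u - v‖ (2 C₂ + C₁ (‖u‖ + ‖v‖))`.
Integrating against `γ` and applying Cauchy–Schwarz twice bounds `R_{ν_dep}(E) - R_ν(E)` by
`c(ν, ν_dep) (∫ ‖u - v‖² dγ)^{1/2}`; taking the infimum over couplings gives
`R_{ν_dep}(E) ≤ R_ν(E) + c(ν, ν_dep) W₂(ν, ν_dep)` for every `E ∈ H`, hence
`inf_H R_{ν_dep} ≤ J(ν)`. The diagonal coupling gives `W₂(ν_dep, ν_dep) = 0`, i.e.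
`J(ν_dep) = inf_H R_{ν_dep}`.
-/

section nU

variable {X Θ : Type*} [NormedAddCommGroup X] [NormedAddCommGroup Θ]

lemma nU_eq_norm_toLp (u : X × Θ) : nU u = ‖WithLp.toLp 2 u‖ :=
  (WithLp.prod_norm_eq_of_L2 _).symm

lemma nU_nonneg (u : X × Θ) : 0 ≤ nU u := Real.sqrt_nonneg _

lemma nU_zero : nU (0 : X × Θ) = 0 := by simp [nU]

lemma nU_sub_comm (u v : X × Θ) : nU (u - v) = nU (v - u) := by
  simp only [nU_eq_norm_toLp, WithLp.toLp_sub, norm_sub_rev]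

lemma nU_sub_le (u v : X × Θ) : nU (u - v) ≤ nU u + nU v := by
  simp only [nU_eq_norm_toLp, WithLp.toLp_sub]
  exact norm_sub_le _ _

lemma continuous_nU : Continuous (nU : X × Θ → ℝ) := by
  simp only [funext nU_eq_norm_toLp]
  exact (WithLp.prod_continuous_toLp 2 X Θ).norm

lemma continuous_of_norm_sub_le_mul_nU {Y : Type*} [NormedAddCommGroup Y] {f : X × Θ → Y}
    {K : ℝ} (hf : ∀ u v, ‖f u - f v‖ ≤ K * nU (u - v)) : Continuous f := by
  have : LipschitzWith (Real.toNNReal K) (f ∘ WithLp.ofLp (p := 2)) :=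
    LipschitzWith.of_dist_le_mul fun a b => by
      simpa [dist_eq_norm, nU_eq_norm_toLp] using
        (hf a.ofLp b.ofLp).trans (mul_le_mul_of_nonneg_right (le_max_left _ _) (nU_nonneg _))
  exact this.continuous.comp (WithLp.prod_continuous_toLp 2 X Θ)

end nU

lemma integral_mul_le_sqrt_mul_sqrt {Ω : Type*} [MeasurableSpace Ω] {μ : Measure Ω}
    {f g : Ω → ℝ} (hf₀ : 0 ≤ᵐ[μ] f) (hg₀ : 0 ≤ᵐ[μ] g) (hf : MemLp f 2 μ) (hg : MemLp g 2 μ) :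
    ∫ ω, f ω * g ω ∂μ ≤ √(∫ ω, f ω ^ 2 ∂μ) * √(∫ ω, g ω ^ 2 ∂μ) := by
  simpa [Real.sqrt_eq_rpow] using integral_mul_le_Lp_mul_Lq_of_nonneg
    Real.HolderConjugate.two_two hf₀ hg₀ (by simpa using hf) (by simpa using hg)

lemma integral_le_sqrt_integral_sq {Ω : Type*} [MeasurableSpace Ω] {μ : Measure Ω}
    [IsProbabilityMeasure μ] {f : Ω → ℝ} (hf₀ : 0 ≤ᵐ[μ] f) (hf : MemLp f 2 μ) :
    ∫ ω, f ω ∂μ ≤ √(∫ ω, f ω ^ 2 ∂μ) := by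
  simpa using integral_mul_le_sqrt_mul_sqrt hf₀ (.of_forall fun _ => zero_le_one) hf
    (memLp_const 1)

section Lipschitz

variable {X Θ Y : Type*} [NormedAddCommGroup X] [NormedAddCommGroup Θ] [NormedAddCommGroup Y]
  {f : X × Θ → Y} {K C L R B : ℝ}

lemma norm_le_add_mul_nU (hf : ∀ u v, ‖f u - f v‖ ≤ K * nU (u - v)) (hC : ‖f 0‖ ≤ C)
    (u : X × Θ) : ‖f u‖ ≤ C + K * nU u := by
  have := hf u 0
  rw [sub_zero] at this
  linarith [norm_le_norm_add_norm_sub' (f u) (f 0)]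

lemma sq_norm_sub_sq_norm_le (hK : 0 ≤ K) (hf : ∀ u v, ‖f u - f v‖ ≤ K * nU (u - v))
    (hC : ‖f 0‖ ≤ C) (u v : X × Θ) :
    ‖f v‖ ^ 2 - ‖f u‖ ^ 2
      ≤ 2 * K * C * nU (u - v) + K ^ 2 * ((nU u + nU v) * nU (u - v)) := by
  have hdiff : ‖f v‖ - ‖f u‖ ≤ K * nU (u - v) := by
    rw [nU_sub_comm]
    exact (le_abs_self _).trans ((abs_norm_sub_norm_le _ _).trans (hf v u))
  have hsum : ‖f v‖ + ‖f u‖ ≤ 2 * C + K * (nU u + nU v) := by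
    linarith [norm_le_add_mul_nU hf hC u, norm_le_add_mul_nU hf hC v]
  have hsum₀ : 0 ≤ ‖f v‖ + ‖f u‖ := by positivity
  have hd₀ : 0 ≤ K * nU (u - v) := mul_nonneg hK (nU_nonneg _)
  nlinarith [mul_le_mul_of_nonneg_right hdiff hsum₀, mul_le_mul_of_nonneg_left hsum hd₀]

lemma norm_sub_sub_le_of_mem_Hclass (hF : ∀ u v, ‖F u - F v‖ ≤ L * nU (u - v))
    (hE : E ∈ (Hclass R B : Set (X × Θ → Y))) (u v : X × Θ) :
    ‖(F - E) u - (F - E) v‖ ≤ (L + R) * nU (u - v) := by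
  rw [Pi.sub_apply, Pi.sub_apply, sub_sub_sub_comm, add_mul]
  exact (norm_sub_le _ _).trans (add_le_add (hF u v) (hE.1 u v))

lemma zero_mem_Hclass (hR : 0 ≤ R) (hB : 0 ≤ B) :
    (0 : X × Θ → Y) ∈ (Hclass R B : Set (X × Θ → Y)) :=
  ⟨fun _ _ => by simpa using mul_nonneg hR (nU_nonneg _), by simpa using hB⟩

lemma cShift_nonneg [MeasurableSpace X] [MeasurableSpace Θ] (hL : 0 ≤ L) (hR : 0 ≤ R)
    (hB : 0 ≤ B) (F : X × Θ → Y) (ν ν' : Measure (X × Θ)) : 0 ≤ cShift L R B F ν ν' := by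
  unfold cShift
  have := add_nonneg hL hR
  positivity

lemma risk_nonneg [MeasurableSpace X] [MeasurableSpace Θ] (F E : X × Θ → Y)
    (ν : Measure (X × Θ)) : 0 ≤ risk F E ν :=
  integral_nonneg fun _ => sq_nonneg _

end Lipschitz

section Moments

variable {X Θ Y : Type*} [NormedAddCommGroup X] [MeasurableSpace X]
  [NormedAddCommGroup Θ] [MeasurableSpace Θ] [OpensMeasurableSpace (X × Θ)]
  {Ω : Type*} [MeasurableSpace Ω] {P : Measure Ω} {U : Ω → X × Θ}

lemma memLp_two_nU_comp (hU : Measurable U) (hU₂ : Integrable (fun ω => nU (U ω) ^ 2) P) :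
    MemLp (fun ω => nU (U ω)) 2 P :=
  (memLp_two_iff_integrable_sq (continuous_nU.measurable.comp hU).aestronglyMeasurable).2 hU₂

lemma integrable_sq_norm_comp [NormedAddCommGroup Y] [IsFiniteMeasure P] {f : X × Θ → Y} {K : ℝ}
    (hf : ∀ u v, ‖f u - f v‖ ≤ K * nU (u - v)) (hU : Measurable U)
    (hU₂ : Integrable (fun ω => nU (U ω) ^ 2) P) : Integrable (fun ω => ‖f (U ω)‖ ^ 2) P := by
  have hmeas : AEStronglyMeasurable (fun ω => ‖f (U ω)‖) P :=
    ((continuous_of_norm_sub_le_mul_nU hf).norm.measurable.comp hU).aestronglyMeasurable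
  refine (memLp_two_iff_integrable_sq hmeas).1 <|
    ((memLp_const ‖f 0‖).add ((memLp_two_nU_comp hU hU₂).const_mul K)).of_le hmeas ?_
  filter_upwards with ω
  simp only [Pi.add_apply, Real.norm_eq_abs, abs_norm]
  exact (norm_le_add_mul_nU hf le_rfl (U ω)).trans (le_abs_self _)

end Moments

section W2

variable {α : Type*} [MeasurableSpace α] {d : α → α → ℝ} {μ μ' : Measure α}

lemma W2_le_sqrt_integral (γ : Measure (α × α)) [IsProbabilityMeasure γ]
    (h₁ : γ.map Prod.fst = μ) (h₂ : γ.map Prod.snd = μ') :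
    W2 d μ μ' ≤ √(∫ p, d p.1 p.2 ^ 2 ∂γ) :=
  csInf_le ⟨0, by rintro _ ⟨_, _, _, _, rfl⟩; positivity⟩ ⟨γ, ‹_›, h₁, h₂, rfl⟩

lemma le_W2_of_forall_coupling [IsProbabilityMeasure μ] [IsProbabilityMeasure μ'] {x : ℝ}
    (h : ∀ γ : Measure (α × α), IsProbabilityMeasure γ → γ.map Prod.fst = μ →
      γ.map Prod.snd = μ' → x ≤ √(∫ p, d p.1 p.2 ^ 2 ∂γ)) :
    x ≤ W2 d μ μ' :=
  le_csInf ⟨_, μ.prod μ', inferInstance, by simp, by simp, rfl⟩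
    (by rintro _ ⟨γ, hγ, h₁, h₂, rfl⟩; exact h γ hγ h₁ h₂)

lemma W2_self (hd : Measurable fun p : α × α => d p.1 p.2) (hdiag : ∀ x, d x x = 0)
    [IsProbabilityMeasure μ] : W2 d μ μ = 0 := by
  have hdiagm : Measurable fun x : α => (x, x) := measurable_id.prodMk measurable_id
  have := Measure.isProbabilityMeasure_map (μ := μ) hdiagm.aemeasurable
  have h₁ : (μ.map fun x => (x, x)).map Prod.fst = μ := by
    rw [Measure.map_map measurable_fst hdiagm]
    exact Measure.map_id
  have h₂ : (μ.map fun x => (x, x)).map Prod.snd = μ := by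
    rw [Measure.map_map measurable_snd hdiagm]
    exact Measure.map_id
  have hcost : ∫ p, d p.1 p.2 ^ 2 ∂(μ.map fun x => (x, x)) = 0 := by
    rw [integral_map hdiagm.aemeasurable (hd.pow_const 2).aestronglyMeasurable]
    simp [hdiag]
  refine le_antisymm ?_ (le_W2_of_forall_coupling fun _ _ _ _ => Real.sqrt_nonneg _)
  simpa [hcost] using W2_le_sqrt_integral (d := d) _ h₁ h₂

lemma le_add_mul_W2_of_forall_coupling [IsProbabilityMeasure μ] [IsProbabilityMeasure μ']
    {a b c : ℝ} (hc : 0 ≤ c)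
    (h : ∀ γ : Measure (α × α), IsProbabilityMeasure γ → γ.map Prod.fst = μ →
      γ.map Prod.snd = μ' → a ≤ b + c * √(∫ p, d p.1 p.2 ^ 2 ∂γ)) :
    a ≤ b + c * W2 d μ μ' := by
  rcases hc.eq_or_lt with rfl | hc
  · simpa using h (μ.prod μ') inferInstance (by simp) (by simp)
  · have : (a - b) / c ≤ W2 d μ μ' := le_W2_of_forall_coupling fun γ hγ h₁ h₂ => by
      rw [div_le_iff₀' hc]
      linarith [h γ hγ h₁ h₂]
    rw [div_le_iff₀' hc] at this
    linarith

end W2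

section Coupling

variable {X Θ Y : Type*}
  [NormedAddCommGroup X] [MeasurableSpace X] [BorelSpace X] [SecondCountableTopology X]
  [NormedAddCommGroup Θ] [MeasurableSpace Θ] [BorelSpace Θ] [SecondCountableTopology Θ]
  [NormedAddCommGroup Y] {f : X × Θ → Y} {K C : ℝ}

lemma integral_sq_norm_comp_le {Ω : Type*} [MeasurableSpace Ω] {P : Measure Ω}
    [IsProbabilityMeasure P] {U V : Ω → X × Θ} (hK : 0 ≤ K)
    (hf : ∀ u v, ‖f u - f v‖ ≤ K * nU (u - v)) (hC : ‖f 0‖ ≤ C)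
    (hU : Measurable U) (hV : Measurable V)
    (hU₂ : Integrable (fun ω => nU (U ω) ^ 2) P) (hV₂ : Integrable (fun ω => nU (V ω) ^ 2) P) :
    ∫ ω, ‖f (V ω)‖ ^ 2 ∂P ≤ ∫ ω, ‖f (U ω)‖ ^ 2 ∂P
      + (K ^ 2 * √(2 * ((∫ ω, nU (U ω) ^ 2 ∂P) + ∫ ω, nU (V ω) ^ 2 ∂P)) + 2 * K * C)
        * √(∫ ω, nU (U ω - V ω) ^ 2 ∂P) := by
  set a := fun ω => nU (U ω)
  set b := fun ω => nU (V ω)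
  set d := fun ω => nU (U ω - V ω)
  have ha := memLp_two_nU_comp hU hU₂
  have hb := memLp_two_nU_comp hV hV₂
  have hab₀ : 0 ≤ᵐ[P] a + b := .of_forall fun ω => add_nonneg (nU_nonneg _) (nU_nonneg _)
  have hd₀ : 0 ≤ᵐ[P] d := .of_forall fun ω => nU_nonneg _
  have hd : MemLp d 2 P := (ha.add hb).of_le
    ((continuous_nU.comp continuous_sub).measurable.comp (hU.prodMk hV)).aestronglyMeasurable
    (.of_forall fun ω => (Real.norm_of_nonneg (nU_nonneg _)).trans_le
      ((nU_sub_le _ _).trans (Real.le_norm_self _)))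
  have hd₁ : Integrable d P := hd.integrable one_le_two
  have habd : Integrable (fun ω => (a + b) ω * d ω) P := (ha.add hb).integrable_mul hd
  have hab₂ : ∫ ω, (a + b) ω ^ 2 ∂P ≤ 2 * ((∫ ω, a ω ^ 2 ∂P) + ∫ ω, b ω ^ 2 ∂P) := by
    rw [← integral_add hU₂ hV₂, ← integral_const_mul]
    exact integral_mono (ha.add hb).integrable_sq ((hU₂.add hV₂).const_mul 2)
      fun ω => by simp only [Pi.add_apply]; nlinarith [sq_nonneg (a ω - b ω)]
  calc ∫ ω, ‖f (V ω)‖ ^ 2 ∂P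
      = ∫ ω, ‖f (U ω)‖ ^ 2 ∂P + ∫ ω, (‖f (V ω)‖ ^ 2 - ‖f (U ω)‖ ^ 2) ∂P := by
        rw [integral_sub (integrable_sq_norm_comp hf hV hV₂) (integrable_sq_norm_comp hf hU hU₂)]
        ring
    _ ≤ ∫ ω, ‖f (U ω)‖ ^ 2 ∂P + ∫ ω, (2 * K * C * d ω + K ^ 2 * ((a + b) ω * d ω)) ∂P := by
        gcongr
        · exact (integrable_sq_norm_comp hf hV hV₂).sub (integrable_sq_norm_comp hf hU hU₂)
        · exact (hd₁.const_mul _).add (habd.const_mul _)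
        · exact fun ω => sq_norm_sub_sq_norm_le hK hf hC (U ω) (V ω)
    _ = ∫ ω, ‖f (U ω)‖ ^ 2 ∂P
          + (2 * K * C * ∫ ω, d ω ∂P + K ^ 2 * ∫ ω, (a + b) ω * d ω ∂P) := by
        rw [integral_add (hd₁.const_mul _) (habd.const_mul _), integral_const_mul,
          integral_const_mul]
    _ ≤ ∫ ω, ‖f (U ω)‖ ^ 2 ∂P
          + (2 * K * C * √(∫ ω, d ω ^ 2 ∂P)
            + K ^ 2 * (√(2 * ((∫ ω, a ω ^ 2 ∂P) + ∫ ω, b ω ^ 2 ∂P)) * √(∫ ω, d ω ^ 2 ∂P))) := by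
        gcongr
        · exact mul_nonneg (mul_nonneg zero_le_two hK) ((norm_nonneg _).trans hC)
        · exact integral_le_sqrt_integral_sq hd₀ hd
        · exact (integral_mul_le_sqrt_mul_sqrt hab₀ hd₀ (ha.add hb) hd).trans
            (by gcongr)
    _ = _ := by ring

end Coupling

section Risk

variable {X Θ Y : Type*}
  [NormedAddCommGroup X] [MeasurableSpace X] [BorelSpace X] [SecondCountableTopology X]
  [NormedAddCommGroup Θ] [MeasurableSpace Θ] [BorelSpace Θ] [SecondCountableTopology Θ]
  [NormedAddCommGroup Y] {F E : X × Θ → Y} {L R B : ℝ}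

lemma risk_le_risk_add_cShift_mul_of_coupling (hL : 0 ≤ L) (hR : 0 ≤ R)
    (hF : ∀ u v, ‖F u - F v‖ ≤ L * nU (u - v)) (hE : E ∈ (Hclass R B : Set (X × Θ → Y)))
    {ν ν' : Measure (X × Θ)} (hν : Integrable (fun u => nU u ^ 2) ν)
    (hν' : Integrable (fun u => nU u ^ 2) ν') {γ : Measure ((X × Θ) × (X × Θ))}
    [IsProbabilityMeasure γ] (h₁ : γ.map Prod.fst = ν) (h₂ : γ.map Prod.snd = ν') :
    risk F E ν' ≤ risk F E ν + cShift L R B F ν ν' * √(∫ p, nU (p.1 - p.2) ^ 2 ∂γ) := by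
  subst h₁ h₂
  have hmap {g : X × Θ → ℝ} (hg : Continuous g) {π : (X × Θ) × (X × Θ) → X × Θ}
      (hπ : Measurable π) : ∫ u, g u ∂(γ.map π) = ∫ p, g (π p) ∂γ :=
    integral_map hπ.aemeasurable hg.aestronglyMeasurable
  have hFE := norm_sub_sub_le_of_mem_Hclass hF hE
  have hloss : Continuous fun u => ‖F u - E u‖ ^ 2 :=
    (continuous_of_norm_sub_le_mul_nU hFE).norm.pow 2
  have hsq : Continuous fun u : X × Θ => nU u ^ 2 := continuous_nU.pow 2
  rw [risk, risk, cShift, hmap hloss measurable_fst, hmap hloss measurable_snd,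
    hmap hsq measurable_fst, hmap hsq measurable_snd]
  exact integral_sq_norm_comp_le (add_nonneg hL hR) hFE
    ((norm_sub_le _ _).trans (add_le_add_right hE.2 _)) measurable_fst measurable_snd
    (hν.comp_measurable measurable_fst) (hν'.comp_measurable measurable_snd)

lemma risk_le_risk_add_cShift_mul_W2 (hL : 0 ≤ L) (hR : 0 ≤ R)
    (hF : ∀ u v, ‖F u - F v‖ ≤ L * nU (u - v)) (hE : E ∈ (Hclass R B : Set (X × Θ → Y)))
    {ν ν' : Measure (X × Θ)} [IsProbabilityMeasure ν] [IsProbabilityMeasure ν']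
    (hν : Integrable (fun u => nU u ^ 2) ν) (hν' : Integrable (fun u => nU u ^ 2) ν') :
    risk F E ν' ≤ risk F E ν + cShift L R B F ν ν' * W2 (fun u v => nU (u - v)) ν ν' :=
  le_add_mul_W2_of_forall_coupling (cShift_nonneg hL hR ((norm_nonneg _).trans hE.2) F ν ν')
    fun _ _ h₁ h₂ => risk_le_risk_add_cShift_mul_of_coupling hL hR hF hE hν hν' h₁ h₂

end Risk

variable {X Θ Y : Type*}
  [NormedAddCommGroup X] [InnerProductSpace ℝ X] [CompleteSpace X]
  [SecondCountableTopology X] [MeasurableSpace X] [BorelSpace X]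
  [NormedAddCommGroup Θ] [InnerProductSpace ℝ Θ] [CompleteSpace Θ]
  [SecondCountableTopology Θ] [MeasurableSpace Θ] [BorelSpace Θ]
  [NormedAddCommGroup Y] [InnerProductSpace ℝ Y] [CompleteSpace Y]
  [SecondCountableTopology Y]

/-- **Proposition, bound-optimality at the deployment law.**
For every Borel probability measure `ν` with finite second moment,
`J(ν) ≥ J(ν_dep) = inf_{E ∈ H} R_{ν_dep}(E)`. -/
theorem bound_optimality (F : X × Θ → Y) (L R B : ℝ)
    (hL : 0 ≤ L) (hR : 0 ≤ R) (hB : 0 ≤ B)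
    (hF : ∀ u v : X × Θ, ‖F u - F v‖ ≤ L * nU (u - v))
    (νdep : Measure (X × Θ)) [IsProbabilityMeasure νdep]
    (hdep : Integrable (fun u => nU u ^ 2) νdep) :
    ∀ ν : Measure (X × Θ), IsProbabilityMeasure ν → Integrable (fun u => nU u ^ 2) ν →
      Jobj L R B F νdep ν ≥ Jobj L R B F νdep νdep ∧
        Jobj L R B F νdep νdep = sInf ((fun E => risk F E νdep) '' (Hclass R B : Set (X × Θ → Y))) := by
  intro ν _ hν
  have hJdep : Jobj L R B F νdep νdep
      = sInf ((fun E => risk F E νdep) '' (Hclass R B : Set (X × Θ → Y))) := by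
    rw [Jobj, W2_self (d := fun u v => nU (u - v))
      (continuous_nU.comp continuous_sub).measurable (by simp [nU_zero]), mul_zero, add_zero]
  refine ⟨?_, hJdep⟩
  rw [ge_iff_le, hJdep, Jobj, ← sub_le_iff_le_add]
  refine le_csInf ⟨_, _, zero_mem_Hclass hR hB, rfl⟩ ?_
  rintro _ ⟨E, hE, rfl⟩
  have hinf : sInf ((fun E => risk F E νdep) '' (Hclass R B : Set (X × Θ → Y)))
      ≤ risk F E νdep :=
    csInf_le ⟨0, by rintro _ ⟨E', -, rfl⟩; exact risk_nonneg F E' νdep⟩ ⟨E, hE, rfl⟩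
  linarith [risk_le_risk_add_cShift_mul_W2 hL hR hF hE hν hdep]
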